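/- For sufficiently small η₀ > 0 there exists C > 0 such that for all t ≥ 0 and all f₁, f₂ ∈ Y₁: ‖e^{t𝒜_*}(f₁,f₂)ᵀ − (1/2)(H_{2t} * W_{4t} * f₁)·e₂‖_{L^∞×L^∞} ≤ C⟨t⟩^{−1/2}(‖f₁‖_{Y₁} + ‖f₂‖_{Y₁}), where * denotes convolution on ℝ. -/

import Mathlib

open MeasureTheory

noncomputable section

/-- The Japanese bracket `⟨x⟩ = √(1+x²)`. -/
def jb (x : ℝ) : ℝ := Real.sqrt (1 + x ^ 2)

/-- `μ₃ = 1/2 + π²/24`. -/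
def mu3 : ℝ := 1 / 2 + Real.pi ^ 2 / 24

/-- `ω(η) = √(16 + (8μ₃ − 1)η²)`. -/
def omg (η : ℝ) : ℝ := Real.sqrt (16 + (8 * mu3 - 1) * η ^ 2)

/-- The `(1,1)` entry of the matrix exponential `e^{t𝒜_*(η)}`. -/
def E11 (t η : ℝ) : ℝ :=
  Real.exp (-2 * t * η ^ 2) *
    (Real.cos (t * η * omg η) - η / omg η * Real.sin (t * η * omg η))

/-- The `(1,2)` entry of the matrix exponential `e^{t𝒜_*(η)}`. -/
def E12 (t η : ℝ) : ℝ :=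
  Real.exp (-2 * t * η ^ 2) * (-(8 * η / omg η) * Real.sin (t * η * omg η))

/-- The `(2,1)` entry of the matrix exponential `e^{t𝒜_*(η)}`. -/
def E21 (t η : ℝ) : ℝ :=
  Real.exp (-2 * t * η ^ 2) *
    ((η ^ 2 + omg η ^ 2) / (8 * η * omg η) * Real.sin (t * η * omg η))

/-- The `(2,2)` entry of the matrix exponential `e^{t𝒜_*(η)}`. -/
def E22 (t η : ℝ) : ℝ :=
  Real.exp (-2 * t * η ^ 2) *
    (Real.cos (t * η * omg η) + η / omg η * Real.sin (t * η * omg η))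

/-- Inverse Fourier transform, `ℱ⁻¹g(y) = (2π)^{-1/2} ∫ g(η) e^{iyη} dη`. -/
def invF (g : ℝ → ℂ) (y : ℝ) : ℂ :=
  ((Real.sqrt (2 * Real.pi) : ℝ) : ℂ)⁻¹ *
    ∫ η : ℝ, g η * Complex.exp (Complex.I * ((η * y : ℝ) : ℂ))

/-- `g` is the Fourier transform of an element of `Y`: `g ∈ L²` and `g` is supported
in `[-η₀, η₀]`.  The corresponding element of `Y` is `f = ℱ⁻¹g = invF g`. -/
def MemYhat (η₀ : ℝ) (g : ℝ → ℂ) : Prop :=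
  MemLp g 2 volume ∧ ∀ η : ℝ, η₀ < |η| → g η = 0

/-- The `Y₁` norm of `f = invF g`, namely `‖f̂‖_{L^∞} = ‖g‖_{L^∞}`. -/
def Y1norm (g : ℝ → ℂ) : ℝ := (eLpNorm g ⊤ volume).toReal

/-- The `L²(ℝ)` norm of a complex-valued function. -/
def L2norm (f : ℝ → ℂ) : ℝ := Real.sqrt (∫ y : ℝ, ‖f y‖ ^ 2)

/-- The first component of `e^{t𝒜_*}(f₁,f₂)ᵀ`, where `f_i = invF g_i`. -/
def row1 (t : ℝ) (g₁ g₂ : ℝ → ℂ) : ℝ → ℂ :=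
  invF fun η => (E11 t η : ℂ) * g₁ η + (E12 t η : ℂ) * g₂ η

/-- The second component of `e^{t𝒜_*}(f₁,f₂)ᵀ`, where `f_i = invF g_i`. -/
def row2 (t : ℝ) (g₁ g₂ : ℝ → ℂ) : ℝ → ℂ :=
  invF fun η => (E21 t η : ℂ) * g₁ η + (E22 t η : ℂ) * g₂ η

/-- The heat kernel `H_t(y) = (4πt)^{-1/2} e^{-y²/(4t)}`. -/
def Hker (t y : ℝ) : ℝ := (Real.sqrt (4 * Real.pi * t))⁻¹ * Real.exp (-y ^ 2 / (4 * t))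

/-- `W_t = (1/2)·1_{[-t,t]}`. -/
def Wfun (t : ℝ) : ℝ → ℝ := Set.indicator (Set.Icc (-t) t) fun _ => (1 : ℝ) / 2

/-- The double convolution `(H_{2t} * W_{4t} * f)(y)`. -/
def convHW (t : ℝ) (f : ℝ → ℂ) (y : ℝ) : ℂ :=
  ∫ z : ℝ, ∫ w : ℝ, ((Hker (2 * t) (y - z) * Wfun (4 * t) (z - w) : ℝ) : ℂ) * f w

/-- The shifted heat convolution `(H_{2t}(· + a) * f)(y)`. -/
def convH (t a : ℝ) (f : ℝ → ℂ) (y : ℝ) : ℂ :=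
  ∫ w : ℝ, ((Hker (2 * t) (y - w + a) : ℝ) : ℂ) * f w

/-!
On the Fourier side, for `|η| ≤ 1`, the entries `E11`, `E12`, `E22` of `e^{t𝒜_*(η)}` are
`O(e^{-tη²})`. The entry `E21` is not, but its singular part `sin(4tη)/(2η)·e^{-2tη²}` is exactly
the symbol of `(1/2) H_{2t} * W_{4t} *`, and what remains is again `O(e^{-tη²})`. The bound then
follows from `‖ℱ⁻¹g‖_∞ ≤ ‖g‖_{L¹}` and `∫_{-1}^{1} e^{-tη²} dη ≲ ⟨t⟩^{-1/2}`, with `η₁ = 1`.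
-/
lemma mu3_bounds : 1 / 2 ≤ mu3 ∧ mu3 ≤ 9 / 8 := by
  have := Real.pi_lt_d2
  have := Real.pi_pos
  constructor <;> unfold mu3 <;> nlinarith

lemma omg_sq (η : ℝ) : omg η ^ 2 = 16 + (8 * mu3 - 1) * η ^ 2 :=
  Real.sq_sqrt (by nlinarith [mu3_bounds.1, sq_nonneg η])

lemma four_le_omg (η : ℝ) : 4 ≤ omg η :=
  Real.le_sqrt_of_sq_le (by nlinarith [mu3_bounds.1, sq_nonneg η])

/-- From `(ω - 4)(ω + 4) = (8μ₃ - 1)η²` with `ω + 4 ≥ 8` and `8μ₃ - 1 ≤ 8`. -/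
lemma omg_sub_four_le (η : ℝ) : omg η - 4 ≤ η ^ 2 := by
  nlinarith [omg_sq η, four_le_omg η, mu3_bounds.2, sq_nonneg η]

lemma abs_div_omg_le {η : ℝ} (hη : |η| ≤ 1) : |η / omg η| ≤ 1 / 4 := by
  have h4 := four_le_omg η
  rw [abs_div, abs_of_pos (show 0 < omg η by linarith), div_le_iff₀ (by linarith)]
  linarith

lemma abs_exp_neg_two_mul_le {s X : ℝ} (hX : |X| ≤ 2 * (1 + s)) :
    |Real.exp (-2 * s) * X| ≤ 2 * Real.exp (-s) := by
  have hsplit : Real.exp (-2 * s) = Real.exp (-s) * Real.exp (-s) := by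
    rw [← Real.exp_add]; ring_nf
  have hdecay : Real.exp (-s) * (1 + s) ≤ 1 := by
    rw [Real.exp_neg, inv_mul_le_iff₀ (Real.exp_pos s), mul_one, add_comm]
    exact Real.add_one_le_exp s
  rw [abs_mul, Real.abs_exp, hsplit]
  have := Real.exp_pos (-s)
  nlinarith [abs_nonneg X]

lemma abs_cos_add_mul_sin_le (θ q : ℝ) : |Real.cos θ + q * Real.sin θ| ≤ 1 + |q| := by
  calc |Real.cos θ + q * Real.sin θ| ≤ |Real.cos θ| + |q| * |Real.sin θ| := by
        rw [← abs_mul]; exact abs_add_le _ _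
    _ ≤ 1 + |q| * 1 := by
        gcongr
        exacts [Real.abs_cos_le_one θ, Real.abs_sin_le_one θ]
    _ = 1 + |q| := by ring

lemma abs_sin_mul_div_le (a η : ℝ) : |Real.sin (a * η) / η| ≤ |a| := by
  rcases eq_or_ne η 0 with rfl | hη
  · simp
  rw [abs_div, div_le_iff₀ (abs_pos.2 hη), ← abs_mul]
  exact Real.abs_sin_le_abs

lemma exp_neg_two_mul_sq_eq (t η : ℝ) :
    Real.exp (-2 * t * η ^ 2) = Real.exp (-2 * (t * η ^ 2)) := by ring_nf

/-- The Fourier symbol of `f ↦ (1/2) H_{2t} * W_{4t} * f`. -/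
def symbolHW (t η : ℝ) : ℝ := Real.exp (-2 * t * η ^ 2) * (Real.sin (4 * t * η) / (2 * η))

lemma abs_symbolHW_le {t : ℝ} (ht : 0 ≤ t) (η : ℝ) : |symbolHW t η| ≤ 2 * t := by
  have hexp : Real.exp (-2 * t * η ^ 2) ≤ 1 := Real.exp_le_one_iff.2 (by nlinarith [sq_nonneg η])
  have hsin := abs_sin_mul_div_le (2 * t) (2 * η)
  rw [show 2 * t * (2 * η) = 4 * t * η by ring,
    abs_of_nonneg (show 0 ≤ 2 * t by positivity)] at hsin
  rw [symbolHW, abs_mul, Real.abs_exp]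
  nlinarith [abs_nonneg (Real.sin (4 * t * η) / (2 * η))]

section SymbolBounds

variable {t η : ℝ}

lemma abs_E11_le (ht : 0 ≤ t) (hη : |η| ≤ 1) : |E11 t η| ≤ 2 * Real.exp (-(t * η ^ 2)) := by
  rw [E11, exp_neg_two_mul_sq_eq]
  refine abs_exp_neg_two_mul_le ?_
  rw [sub_eq_add_neg, ← neg_mul]
  have := abs_cos_add_mul_sin_le (t * η * omg η) (-(η / omg η))
  rw [abs_neg] at this
  nlinarith [abs_div_omg_le hη, sq_nonneg η]

lemma abs_E22_le (ht : 0 ≤ t) (hη : |η| ≤ 1) : |E22 t η| ≤ 2 * Real.exp (-(t * η ^ 2)) := by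
  rw [E22, exp_neg_two_mul_sq_eq]
  refine abs_exp_neg_two_mul_le ?_
  nlinarith [abs_cos_add_mul_sin_le (t * η * omg η) (η / omg η), abs_div_omg_le hη, sq_nonneg η]

lemma abs_E12_le (ht : 0 ≤ t) (hη : |η| ≤ 1) : |E12 t η| ≤ 2 * Real.exp (-(t * η ^ 2)) := by
  rw [E12, exp_neg_two_mul_sq_eq]
  refine abs_exp_neg_two_mul_le ?_
  rw [abs_mul, abs_neg, mul_div_assoc, abs_mul, abs_of_pos (by norm_num : (0 : ℝ) < 8)]
  have := Real.abs_sin_le_one (t * η * omg η)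
  nlinarith [abs_div_omg_le hη, abs_nonneg (η / omg η), sq_nonneg η, mul_nonneg ht (sq_nonneg η)]

/-- The singular part `1/(2η)` of `(η² + ω²)/(8ηω) = η/(8ω) + (ω - 4)/(8η) + 1/(2η)` is cancelled
by `symbolHW`; the rest is bounded since `ω - 4 = O(η²)`. -/
lemma abs_E21_sub_symbolHW_le (ht : 0 ≤ t) (hη : |η| ≤ 1) :
    |E21 t η - symbolHW t η| ≤ 2 * Real.exp (-(t * η ^ 2)) := by
  rcases eq_or_ne η 0 with rfl | hη0
  · simp [E21, symbolHW]
  have hsplit : E21 t η - symbolHW t η = Real.exp (-2 * (t * η ^ 2)) *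
      (η / omg η / 8 * Real.sin (t * η * omg η) + (omg η - 4) / (8 * η) * Real.sin (t * η * omg η)
        + (Real.sin (t * η * omg η) - Real.sin (4 * t * η)) / (2 * η)) := by
    have : omg η ≠ 0 := by linarith [four_le_omg η]
    rw [E21, symbolHW, exp_neg_two_mul_sq_eq, ← mul_sub]
    field_simp
    ring
  have hw := four_le_omg η
  have hηpos : 0 < |η| := abs_pos.2 hη0
  set w := omg η
  set S := Real.sin (t * η * w)
  set S' := Real.sin (4 * t * η)
  have hS : |S| ≤ 1 := Real.abs_sin_le_one _
  rw [hsplit]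
  refine abs_exp_neg_two_mul_le ?_
  have e1 : |η / w / 8 * S| ≤ 1 := by
    rw [abs_mul, abs_div, abs_of_pos (by norm_num : (0 : ℝ) < 8)]
    nlinarith [abs_div_omg_le hη, abs_nonneg S, abs_nonneg (η / w)]
  have e2 : |(w - 4) / (8 * η) * S| ≤ 1 := by
    have hq : |(w - 4) / (8 * η)| ≤ |η| / 8 := by
      rw [abs_div, abs_of_nonneg (by linarith), abs_mul, abs_of_pos (by norm_num : (0 : ℝ) < 8),
        div_le_iff₀ (by positivity)]
      nlinarith [omg_sub_four_le η, sq_abs η]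
    rw [abs_mul]
    nlinarith [abs_nonneg S, abs_nonneg ((w - 4) / (8 * η))]
  have e3 : |(S - S') / (2 * η)| ≤ t * η ^ 2 / 2 := by
    have hdiff : |S - S'| ≤ t * |η| * η ^ 2 := by
      calc |S - S'| ≤ |t * η * w - 4 * t * η| := Real.abs_sin_sub_sin_le _ _
        _ = t * |η| * (w - 4) := by
          rw [show t * η * w - 4 * t * η = t * η * (w - 4) by ring, abs_mul, abs_mul,
            abs_of_nonneg ht, abs_of_nonneg (show 0 ≤ w - 4 by linarith)]
        _ ≤ t * |η| * η ^ 2 := by gcongr; exact omg_sub_four_le η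
    rw [abs_div, abs_mul, abs_of_pos (by norm_num : (0 : ℝ) < 2), div_le_iff₀ (by positivity)]
    linarith
  calc _ ≤ |η / w / 8 * S| + |(w - 4) / (8 * η) * S| + |(S - S') / (2 * η)| :=
        abs_add_three _ _ _
    _ ≤ 2 * (1 + t * η ^ 2) := by nlinarith [mul_nonneg ht (sq_nonneg η)]

end SymbolBounds

lemma norm_cexp_I_mul_ofReal (r : ℝ) : ‖Complex.exp (Complex.I * (r : ℂ))‖ = 1 := by
  rw [mul_comm]; exact Complex.norm_exp_ofReal_mul_I r

lemma norm_invF_le (h : ℝ → ℂ) (y : ℝ) : ‖invF h y‖ ≤ ∫ η, ‖h η‖ := by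
  have hc : ‖(((Real.sqrt (2 * Real.pi) : ℝ) : ℂ))⁻¹‖ ≤ 1 := by
    rw [norm_inv, Complex.norm_real, Real.norm_eq_abs, abs_of_nonneg (Real.sqrt_nonneg _)]
    refine inv_le_one_of_one_le₀ (Real.one_le_sqrt.2 ?_)
    nlinarith [Real.pi_gt_three]
  rw [invF, norm_mul]
  calc _ ≤ 1 * ‖∫ η, h η * Complex.exp (Complex.I * ((η * y : ℝ) : ℂ))‖ := by gcongr
    _ ≤ ∫ η, ‖h η * Complex.exp (Complex.I * ((η * y : ℝ) : ℂ))‖ := by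
      rw [one_mul]; exact norm_integral_le_integral_norm _
    _ = ∫ η, ‖h η‖ := by simp only [norm_mul, norm_cexp_I_mul_ofReal, mul_one]

lemma integrable_mul_cexp {h : ℝ → ℂ} (hh : Integrable h) (y : ℝ) :
    Integrable fun η : ℝ => h η * Complex.exp (Complex.I * ((η * y : ℝ) : ℂ)) :=
  hh.mul_bdd (by fun_prop) (Filter.Eventually.of_forall fun η => (norm_cexp_I_mul_ofReal _).le)

lemma invF_add {f g : ℝ → ℂ} (hf : Integrable f) (hg : Integrable g) (y : ℝ) :
    invF (fun η => f η + g η) y = invF f y + invF g y := by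
  simp only [invF, add_mul, ← mul_add]
  rw [integral_add (integrable_mul_cexp hf y) (integrable_mul_cexp hg y)]

lemma const_mul_invF (c : ℂ) (h : ℝ → ℂ) (y : ℝ) :
    c * invF h y = invF (fun η => c * h η) y := by
  simp only [invF, mul_assoc, integral_const_mul]
  ring

section GaussianEnvelope

variable {h : ℝ → ℂ} {B c : ℝ}

lemma integrable_of_ae_norm_le_gaussian (hc : 0 < c) (hmeas : AEStronglyMeasurable h)
    (hb : ∀ᵐ η, ‖h η‖ ≤ B * Real.exp (-c * η ^ 2)) : Integrable h :=
  ((integrable_exp_neg_mul_sq hc).const_mul B).mono' hmeas hb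

lemma norm_invF_le_of_ae_norm_le_gaussian (hc : 0 < c)
    (hb : ∀ᵐ η, ‖h η‖ ≤ B * Real.exp (-c * η ^ 2)) (y : ℝ) :
    ‖invF h y‖ ≤ B * Real.sqrt (Real.pi / c) := by
  calc ‖invF h y‖ ≤ ∫ η, ‖h η‖ := norm_invF_le h y
    _ ≤ ∫ η, B * Real.exp (-c * η ^ 2) := integral_mono_of_nonneg
        (Filter.Eventually.of_forall fun _ => norm_nonneg _)
        ((integrable_exp_neg_mul_sq hc).const_mul B) hb
    _ = B * Real.sqrt (Real.pi / c) := by rw [integral_const_mul, integral_gaussian]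

end GaussianEnvelope

/-- Trading `e^{-tη²}` for `e^{-(1+t)η²}` on `|η| ≤ 1` gives the decay `⟨t⟩^{-1/2}` uniformly
in `t ≥ 0`. -/
lemma exp_neg_mul_sq_le {t η : ℝ} (hη : |η| ≤ 1) :
    Real.exp (-(t * η ^ 2)) ≤ Real.exp 1 * Real.exp (-(1 + t) * η ^ 2) := by
  rw [← Real.exp_add, Real.exp_le_exp]
  nlinarith [sq_abs η, abs_nonneg η]

lemma sqrt_pi_div_one_add_le {t : ℝ} (ht : 0 ≤ t) :
    Real.sqrt (Real.pi / (1 + t)) ≤ Real.sqrt Real.pi * jb t ^ (-(1 / 2) : ℝ) := by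
  have hjb : 0 < jb t := Real.sqrt_pos.2 (by positivity)
  have hjb_le : jb t ≤ 1 + t :=
    Real.sqrt_le_iff.2 ⟨by positivity, by nlinarith⟩
  rw [Real.sqrt_div' _ (by positivity), div_eq_mul_inv, Real.rpow_neg hjb.le,
    ← Real.sqrt_eq_rpow]
  gcongr

section MemYhat

variable {η₀ : ℝ} {g : ℝ → ℂ}

lemma MemYhat.integrable (hg : MemYhat η₀ g) : Integrable g := by
  have hsupp : Function.support g ⊆ Set.Icc (-η₀) η₀ := fun η hη => by
    by_contra hout
    exact hη (hg.2 η (by rwa [Set.mem_Icc, ← abs_le, not_le] at hout))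
  rw [← integrableOn_iff_integrable_of_support_subset hsupp]
  exact (hg.1.restrict _).integrable one_le_two

lemma ae_norm_le_Y1norm (hg' : eLpNorm g ⊤ volume < ⊤) : ∀ᵐ η, ‖g η‖ ≤ Y1norm g := by
  filter_upwards [ae_le_eLpNormEssSup (f := g) (μ := volume)] with η hη
  rw [Y1norm, eLpNorm_exponent_top, ← ofReal_norm] at *
  exact (ENNReal.ofReal_le_iff_le_toReal hg'.ne).1 hη

lemma MemYhat.ae_norm_mul_le (hg : MemYhat η₀ g) (hg' : eLpNorm g ⊤ volume < ⊤)
    {a φ : ℝ → ℝ} (hφ : ∀ η, 0 ≤ φ η) (ha : ∀ η, |η| ≤ η₀ → |a η| ≤ φ η) :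
    ∀ᵐ η, ‖(a η : ℂ) * g η‖ ≤ φ η * Y1norm g := by
  filter_upwards [ae_norm_le_Y1norm hg'] with η hη
  rw [norm_mul, Complex.norm_real, Real.norm_eq_abs]
  rcases le_or_gt |η| η₀ with hin | hout
  · exact mul_le_mul (ha η hin) hη (norm_nonneg _) (hφ η)
  · rw [hg.2 η hout, norm_zero, mul_zero]
    exact mul_nonneg (hφ η) ENNReal.toReal_nonneg

end MemYhat

section SymbolEstimate

variable {t η₀ : ℝ} {g₁ g₂ : ℝ → ℂ} {a b : ℝ → ℝ}

lemma ae_norm_symbol_mul_le (hη₀ : η₀ ≤ 1) (hg₁ : MemYhat η₀ g₁) (hg₂ : MemYhat η₀ g₂)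
    (hg₁' : eLpNorm g₁ ⊤ volume < ⊤) (hg₂' : eLpNorm g₂ ⊤ volume < ⊤)
    (ha : ∀ η, |η| ≤ 1 → |a η| ≤ 2 * Real.exp (-(t * η ^ 2)))
    (hb : ∀ η, |η| ≤ 1 → |b η| ≤ 2 * Real.exp (-(t * η ^ 2))) :
    ∀ᵐ η, ‖(a η : ℂ) * g₁ η + (b η : ℂ) * g₂ η‖ ≤
      2 * Real.exp 1 * (Y1norm g₁ + Y1norm g₂) * Real.exp (-(1 + t) * η ^ 2) := by
  set φ : ℝ → ℝ := fun η => 2 * Real.exp 1 * Real.exp (-(1 + t) * η ^ 2)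
  have hφ : ∀ η, 0 ≤ φ η := fun η => by positivity
  have henv {c : ℝ → ℝ} (hc : ∀ η, |η| ≤ 1 → |c η| ≤ 2 * Real.exp (-(t * η ^ 2))) :
      ∀ η, |η| ≤ η₀ → |c η| ≤ φ η := fun η hη => by
    have h1 : |η| ≤ 1 := hη.trans hη₀
    nlinarith [hc η h1, exp_neg_mul_sq_le (t := t) h1]
  filter_upwards [hg₁.ae_norm_mul_le hg₁' hφ (henv ha), hg₂.ae_norm_mul_le hg₂' hφ (henv hb)]
    with η h₁ h₂
  calc _ ≤ ‖(a η : ℂ) * g₁ η‖ + ‖(b η : ℂ) * g₂ η‖ := norm_add_le _ _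
    _ ≤ φ η * Y1norm g₁ + φ η * Y1norm g₂ := add_le_add h₁ h₂
    _ = _ := by ring

lemma norm_invF_symbol_mul_le (ht : 0 ≤ t) (hη₀ : η₀ ≤ 1) (hg₁ : MemYhat η₀ g₁)
    (hg₂ : MemYhat η₀ g₂) (hg₁' : eLpNorm g₁ ⊤ volume < ⊤) (hg₂' : eLpNorm g₂ ⊤ volume < ⊤)
    (ha : ∀ η, |η| ≤ 1 → |a η| ≤ 2 * Real.exp (-(t * η ^ 2)))
    (hb : ∀ η, |η| ≤ 1 → |b η| ≤ 2 * Real.exp (-(t * η ^ 2))) (y : ℝ) :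
    ‖invF (fun η => (a η : ℂ) * g₁ η + (b η : ℂ) * g₂ η) y‖ ≤
      2 * Real.exp 1 * Real.sqrt Real.pi * jb t ^ (-(1 / 2) : ℝ) * (Y1norm g₁ + Y1norm g₂) := by
  have hM : 0 ≤ Y1norm g₁ + Y1norm g₂ := add_nonneg ENNReal.toReal_nonneg ENNReal.toReal_nonneg
  calc _ ≤ 2 * Real.exp 1 * (Y1norm g₁ + Y1norm g₂) * Real.sqrt (Real.pi / (1 + t)) :=
        norm_invF_le_of_ae_norm_le_gaussian (by positivity)
          (ae_norm_symbol_mul_le hη₀ hg₁ hg₂ hg₁' hg₂' ha hb) y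
    _ ≤ 2 * Real.exp 1 * (Y1norm g₁ + Y1norm g₂) *
          (Real.sqrt Real.pi * jb t ^ (-(1 / 2) : ℝ)) := by
        gcongr; exact sqrt_pi_div_one_add_le ht
    _ = _ := by ring

end SymbolEstimate

lemma integral_comp_sub_mul_cexp (K : ℝ → ℂ) (y η : ℝ) :
    ∫ z, K (y - z) * Complex.exp (Complex.I * ((η * z : ℝ) : ℂ)) =
      Complex.exp (Complex.I * ((η * y : ℝ) : ℂ)) *
        ∫ x, K x * Complex.exp (-(Complex.I * ((η * x : ℝ) : ℂ))) := by
  calc _ = ∫ z, (fun x => K x * Complex.exp (Complex.I * ((η * (y - x) : ℝ) : ℂ))) (y - z) := by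
        simp only [sub_sub_cancel]
    _ = ∫ x, K x * Complex.exp (Complex.I * ((η * (y - x) : ℝ) : ℂ)) :=
        integral_sub_left_eq_self
          (fun x => K x * Complex.exp (Complex.I * ((η * (y - x) : ℝ) : ℂ))) volume y
    _ = _ := by
        rw [← integral_const_mul]
        congr with x
        rw [mul_left_comm, ← Complex.exp_add]
        push_cast
        ring_nf

/-- `hm` says `m = √(2π) K̂` in the normalisation of `invF`. -/
lemma integral_kernel_mul_invF {K h m : ℝ → ℂ} (hK : Integrable K) (hh : Integrable h)
    (hm : ∀ᵐ η, ∫ x, K x * Complex.exp (-(Complex.I * ((η * x : ℝ) : ℂ))) = m η) (y : ℝ) :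
    ∫ z, K (y - z) * invF h z = invF (fun η => m η * h η) y := by
  set F : ℝ → ℝ → ℂ := fun z η =>
    K (y - z) * h η * Complex.exp (Complex.I * ((η * z : ℝ) : ℂ))
  have hF : Integrable (Function.uncurry F) (volume.prod volume) :=
    ((hK.comp_sub_left y).mul_prod hh).mul_bdd (by fun_prop)
      (Filter.Eventually.of_forall fun p => (norm_cexp_I_mul_ofReal _).le)
  have hinner : ∀ z, K (y - z) * invF h z =
      ((Real.sqrt (2 * Real.pi) : ℝ) : ℂ)⁻¹ * ∫ η, F z η := fun z => by
    simp only [F, invF, mul_assoc, integral_const_mul]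
    ring
  simp only [hinner, integral_const_mul]
  rw [integral_integral_swap hF, invF]
  congr 1
  refine integral_congr_ae (hm.mono fun η hη => ?_)
  simp only [F, mul_right_comm _ (h η), integral_mul_const, integral_comp_sub_mul_cexp, hη]
  ring

lemma integral_Wfun_mul_cexp {a η : ℝ} (ha : 0 ≤ a) (hη : η ≠ 0) :
    ∫ x, (Wfun a x : ℂ) * Complex.exp (-(Complex.I * ((η * x : ℝ) : ℂ))) =
      ((Real.sin (a * η) / η : ℝ) : ℂ) := by
  have hη' : -(Complex.I * η) ≠ 0 := by simp [hη]
  have hind : ∀ x, (Wfun a x : ℂ) * Complex.exp (-(Complex.I * ((η * x : ℝ) : ℂ))) =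
      (Set.Icc (-a) a).indicator (fun x : ℝ => 1 / 2 * Complex.exp (-(Complex.I * η) * x)) x := by
    intro x
    by_cases hx : x ∈ Set.Icc (-a) a <;> simp [Wfun, hx, mul_assoc]
  simp only [hind]
  rw [integral_indicator measurableSet_Icc, integral_Icc_eq_integral_Ioc,
    ← intervalIntegral.integral_of_le (by linarith), intervalIntegral.integral_const_mul,
    integral_exp_mul_complex hη']
  have hsin := Complex.two_sin (η * a)
  push_cast
  field_simp
  rw [show -(Complex.I * η * a) = -(η * a) * Complex.I by ring,
    show Complex.I * η * a = η * a * Complex.I by ring]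
  linear_combination (-Complex.I / η) * hsin -
    ((Complex.exp (-(η * a) * Complex.I) - Complex.exp (η * a * Complex.I)) / η) * Complex.I_sq

lemma Hker_eq (s x : ℝ) :
    Hker s x = (Real.sqrt (4 * Real.pi * s))⁻¹ * Real.exp (-(4 * s)⁻¹ * x ^ 2) := by
  rw [Hker]; congr 2; ring

lemma integrable_Hker {s : ℝ} (hs : 0 < s) : Integrable (Hker s) := by
  simp only [funext (Hker_eq s)]
  exact (integrable_exp_neg_mul_sq (by positivity)).const_mul _

lemma integral_Hker_mul_cexp {s : ℝ} (hs : 0 < s) (η : ℝ) :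
    ∫ x, (Hker s x : ℂ) * Complex.exp (-(Complex.I * ((η * x : ℝ) : ℂ))) =
      ((Real.exp (-s * η ^ 2) : ℝ) : ℂ) := by
  set b : ℂ := (((4 * s)⁻¹ : ℝ) : ℂ)
  have hb : 0 < b.re := by simp only [b, Complex.ofReal_re]; positivity
  have hsqrt : (Real.pi / b) ^ (1 / 2 : ℂ) = ((Real.sqrt (4 * Real.pi * s) : ℝ) : ℂ) := by
    rw [show (Real.pi : ℂ) / b = ((4 * Real.pi * s : ℝ) : ℂ) by
        simp only [b]; push_cast; field_simp,
      show (1 / 2 : ℂ) = ((1 / 2 : ℝ) : ℂ) by norm_num, ← Complex.ofReal_cpow (by positivity),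
      ← Real.sqrt_eq_rpow]
  have hpt : ∀ x : ℝ, (Hker s x : ℂ) * Complex.exp (-(Complex.I * ((η * x : ℝ) : ℂ))) =
      ((Real.sqrt (4 * Real.pi * s) : ℝ) : ℂ)⁻¹ *
        (Complex.exp (Complex.I * (-η : ℂ) * x) * Complex.exp (-b * x ^ 2)) := by
    intro x
    rw [Hker_eq]
    simp only [b]
    push_cast
    ring_nf
  have hne : ((Real.sqrt (4 * Real.pi * s) : ℝ) : ℂ) ≠ 0 :=
    Complex.ofReal_ne_zero.2 (Real.sqrt_pos.2 (by positivity)).ne'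
  simp only [hpt]
  rw [integral_const_mul, fourierIntegral_gaussian hb, hsqrt, inv_mul_cancel_left₀ hne]
  simp only [b]
  push_cast
  field_simp

lemma integrable_Wfun (a : ℝ) : Integrable (Wfun a) :=
  (integrable_indicator_iff measurableSet_Icc).2 (integrableOn_const measure_Icc_lt_top.ne)

/-- `W_{4t}` contributes the factor `sin(4tη)/η` and `H_{2t}` the factor `e^{-2tη²}`. -/
lemma half_convHW_invF {t : ℝ} (ht : 0 ≤ t) {g : ℝ → ℂ} (hg : Integrable g) (y : ℝ) :
    (1 / 2 : ℂ) * convHW t (invF g) y = invF (fun η => (symbolHW t η : ℂ) * g η) y := by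
  rcases ht.eq_or_lt with rfl | ht
  · simp [convHW, Hker, symbolHW, invF]
  set sW : ℝ → ℂ := fun η => ((Real.sin (4 * t * η) / η : ℝ) : ℂ)
  have hW : ∀ z, ∫ w, (Wfun (4 * t) (z - w) : ℂ) * invF g w = invF (fun η => sW η * g η) z :=
    integral_kernel_mul_invF (integrable_Wfun _).ofReal hg
      ((Measure.ae_ne volume 0).mono fun η hη => integral_Wfun_mul_cexp (by positivity) hη)
  have hsWg : Integrable fun η => sW η * g η :=
    hg.bdd_mul (by fun_prop) (Filter.Eventually.of_forall fun η => by
      simpa only [sW, Complex.norm_real, Real.norm_eq_abs] using abs_sin_mul_div_le (4 * t) η)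
  have hH : ∫ z, (Hker (2 * t) (y - z) : ℂ) * invF (fun η => sW η * g η) z =
      invF (fun η => (Real.exp (-(2 * t) * η ^ 2) : ℂ) * (sW η * g η)) y :=
    integral_kernel_mul_invF (integrable_Hker (by positivity : 0 < 2 * t)).ofReal hsWg
    (Filter.Eventually.of_forall (integral_Hker_mul_cexp (by positivity))) y
  calc (1 / 2 : ℂ) * convHW t (invF g) y
      = (1 / 2 : ℂ) * ∫ z, (Hker (2 * t) (y - z) : ℂ) * invF (fun η => sW η * g η) z := by
        simp only [convHW, Complex.ofReal_mul, mul_assoc, integral_const_mul, hW]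
    _ = invF (fun η => (symbolHW t η : ℂ) * g η) y := by
        rw [hH, const_mul_invF]
        congr with η
        simp only [symbolHW, sW]
        push_cast
        ring_nf

lemma row2_sub_half_convHW {t η₀ : ℝ} (ht : 0 ≤ t) (hη₀ : η₀ ≤ 1) {g₁ g₂ : ℝ → ℂ}
    (hg₁ : MemYhat η₀ g₁) (hg₂ : MemYhat η₀ g₂)
    (hg₁' : eLpNorm g₁ ⊤ volume < ⊤) (hg₂' : eLpNorm g₂ ⊤ volume < ⊤) (y : ℝ) :
    row2 t g₁ g₂ y - (1 / 2 : ℂ) * convHW t (invF g₁) y =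
      invF (fun η => ((E21 t η - symbolHW t η : ℝ) : ℂ) * g₁ η + (E22 t η : ℂ) * g₂ η) y := by
  set h : ℝ → ℂ := fun η => ((E21 t η - symbolHW t η : ℝ) : ℂ) * g₁ η + (E22 t η : ℂ) * g₂ η
  have hh : Integrable h :=
    integrable_of_ae_norm_le_gaussian (by positivity : (0 : ℝ) < 1 + t)
      (by have := hg₁.1.1; have := hg₂.1.1; unfold h E21 E22 symbolHW omg; fun_prop)
      (ae_norm_symbol_mul_le hη₀ hg₁ hg₂ hg₁' hg₂' (fun _ hη => abs_E21_sub_symbolHW_le ht hη)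
        (fun _ hη => abs_E22_le ht hη))
  have hs : Integrable fun η => (symbolHW t η : ℂ) * g₁ η :=
    hg₁.integrable.bdd_mul (by unfold symbolHW; fun_prop) (Filter.Eventually.of_forall fun η => by
      simpa only [Complex.norm_real, Real.norm_eq_abs] using abs_symbolHW_le ht η)
  have hrow2 : row2 t g₁ g₂ = invF fun η => h η + (symbolHW t η : ℂ) * g₁ η := by
    unfold row2
    congr with η
    simp only [h]
    push_cast
    ring
  rw [hrow2, invF_add hh hs, half_convHW_invF ht hg₁.integrable, add_sub_cancel_right]

/-- Leading order asymptotics of `e^{t𝒜_*}(f₁,f₂)ᵀ`: it is approximated by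
`(1/2)(H_{2t} * W_{4t} * f₁)·e₂` with error `O(⟨t⟩^{-1/2})` in `L^∞ × L^∞`. -/
theorem etA_asymptotics_1 :
    ∃ η₁ : ℝ, 0 < η₁ ∧ ∀ η₀ : ℝ, 0 < η₀ → η₀ ≤ η₁ →
      ∃ C : ℝ, 0 < C ∧ ∀ t : ℝ, 0 ≤ t → ∀ g₁ g₂ : ℝ → ℂ,
        MemYhat η₀ g₁ → MemYhat η₀ g₂ →
        eLpNorm g₁ ⊤ volume < ⊤ → eLpNorm g₂ ⊤ volume < ⊤ →
        ∀ y : ℝ,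
          ‖row1 t g₁ g₂ y‖ ≤ C * jb t ^ (-(1 / 2) : ℝ) * (Y1norm g₁ + Y1norm g₂) ∧
          ‖row2 t g₁ g₂ y - (1 / 2 : ℂ) * convHW t (invF g₁) y‖
              ≤ C * jb t ^ (-(1 / 2) : ℝ) * (Y1norm g₁ + Y1norm g₂) := by
  refine ⟨1, one_pos, fun η₀ _ hη₀ => ⟨2 * Real.exp 1 * Real.sqrt Real.pi, by positivity,
    fun t ht g₁ g₂ hg₁ hg₂ hg₁' hg₂' y => ⟨?_, ?_⟩⟩⟩
  · exact norm_invF_symbol_mul_le ht hη₀ hg₁ hg₂ hg₁' hg₂'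
      (fun _ hη => abs_E11_le ht hη) (fun _ hη => abs_E12_le ht hη) y
  · rw [row2_sub_half_convHW ht hη₀ hg₁ hg₂ hg₁' hg₂' y]
    exact norm_invF_symbol_mul_le ht hη₀ hg₁ hg₂ hg₁' hg₂'
      (fun _ hη => abs_E21_sub_symbolHW_le ht hη) (fun _ hη => abs_E22_le ht hη) y
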